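/- arXiv:0911.0092 — 9 statements merged into one kernel-verified Lean document; each statement's English description precedes it below -/
import Mathlib

section
/- Let (X, μ) be a probability space, P a self-adjoint Markov-type operator on L²(X,μ) with P1 = 1, P preserving the orthocomplement of constants with norm at most ρ there, and P nonnegativity-preserving. Let B ⊆ X be measurable with μ(B) = b, and let A ⊆ X be measurable such that P(1_B) = 0 almost everywhere on the complement of A, with μ(A) = b'. Then b' ≥ b / (ρ²(1−b) + b). -/
/-! Let `u = P 1_B`. Since `u` vanishes off `A`, Cauchy–Schwarz against `1_A` gives
`(∫ u)² ≤ μ(A) ‖u‖²`, and `∫ u = ⟪P 1, 1_B⟫ = b` by self-adjointness. Splitting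
`1_B = b • 1 + g` with `g ⊥ 1` and `‖g‖² = b - b²`, the spectral gap gives
`‖u‖² ≤ ρ² (b - b²) + b² = b (ρ² (1 - b) + b)`. Together, `b² ≤ b' b (ρ² (1 - b) + b)`. -/

open MeasureTheory
open scoped RealInnerProductSpace

section SpectralGap

variable {E : Type*} [NormedAddCommGroup E] [InnerProductSpace ℝ E]

theorem norm_add_smul_sq_of_inner_eq_zero {x e : E} (he : ‖e‖ = 1) (hx : ⟪x, e⟫ = 0) (c : ℝ) :
    ‖x + c • e‖ ^ 2 = ‖x‖ ^ 2 + c ^ 2 := by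
  have hxe : ⟪x, c • e⟫ = 0 := by rw [real_inner_smul_right, hx, mul_zero]
  rw [sq, sq, norm_add_sq_eq_norm_sq_add_norm_sq_real hxe, norm_smul, he, mul_one,
    Real.norm_eq_abs, abs_mul_abs_self, sq]

theorem LinearMap.IsSymmetric.norm_apply_sq_le_of_spectral_gap {T : E →ₗ[ℝ] E}
    (hT : T.IsSymmetric) {e : E} (he : ‖e‖ = 1) (hTe : T e = e) {ρ : ℝ}
    (hgap : ∀ g, ⟪g, e⟫ = 0 → ‖T g‖ ≤ ρ * ‖g‖) (f : E) :
    ‖T f‖ ^ 2 ≤ ρ ^ 2 * (‖f‖ ^ 2 - ⟪f, e⟫ ^ 2) + ⟪f, e⟫ ^ 2 := by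
  set c := ⟪f, e⟫
  set g := f - c • e
  have hf : f = g + c • e := (sub_add_cancel f _).symm
  have hg : ⟪g, e⟫ = 0 := by
    rw [inner_sub_left, real_inner_smul_left, real_inner_self_eq_norm_sq, he]
    ring
  have hTg : ⟪T g, e⟫ = 0 := by rw [hT, hTe, hg]
  have hTf : T f = T g + c • e := by conv_lhs => rw [hf, map_add, map_smul, hTe]
  have hgap_sq : ‖T g‖ ^ 2 ≤ ρ ^ 2 * ‖g‖ ^ 2 := by
    rw [← mul_pow]
    exact pow_le_pow_left₀ (norm_nonneg _) (hgap g hg) 2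
  rw [hTf, norm_add_smul_sq_of_inner_eq_zero he hTg, hf, norm_add_smul_sq_of_inner_eq_zero he hg]
  linarith

end SpectralGap

theorem MeasureTheory.L2.sq_integral_le_measureReal_mul_norm_sq {X : Type*} [MeasurableSpace X]
    {μ : Measure X} (u : Lp ℝ 2 μ) {A : Set X} (hA : MeasurableSet A) (hμA : μ A ≠ ⊤)
    (hu : ∀ᵐ x ∂μ, x ∉ A → u x = 0) :
    (∫ x, u x ∂μ) ^ 2 ≤ μ.real A * ‖u‖ ^ 2 := by
  set χ := indicatorConstLp 2 hA hμA (1 : ℝ)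
  calc (∫ x, u x ∂μ) ^ 2 = ⟪χ, u⟫ * ⟪χ, u⟫ := by
        rw [L2.inner_indicatorConstLp_one, setIntegral_eq_integral_of_ae_compl_eq_zero hu, sq]
    _ ≤ ⟪χ, χ⟫ * ⟪u, u⟫ := real_inner_mul_inner_self_le χ u
    _ = μ.real A * ‖u‖ ^ 2 := by
        rw [L2.real_inner_indicatorConstLp_one_indicatorConstLp_one, Set.inter_self,
          real_inner_self_eq_norm_sq]

theorem div_le_of_sq_le_mul_mul {b b' D : ℝ} (hb : 0 ≤ b) (hb' : 0 ≤ b') (hD : 0 ≤ D)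
    (h : b ^ 2 ≤ b' * (b * D)) : b / D ≤ b' := by
  refine div_le_of_le_mul₀ hD hb' ?_
  rcases hb.eq_or_lt with rfl | hb_pos
  · positivity
  · exact le_of_mul_le_mul_left (by linarith) hb_pos

theorem neighbor_expansion_general
    {X : Type*} [MeasurableSpace X] (μ : Measure X) [IsProbabilityMeasure μ]
    (P : Lp ℝ 2 μ →L[ℝ] Lp ℝ 2 μ) (ρ : ℝ)
    (one : Lp ℝ 2 μ)
    (hone : one = indicatorConstLp 2 MeasurableSet.univ (measure_ne_top μ _) (1 : ℝ))
    (hP1 : P one = one)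
    (hSA : ∀ f g : Lp ℝ 2 μ, ⟪P f, g⟫ = ⟪f, P g⟫)
    (hbound : ∀ f : Lp ℝ 2 μ, ⟪f, one⟫ = 0 → ‖P f‖ ≤ ρ * ‖f‖)
    (B A : Set X) (hB : MeasurableSet B) (hA : MeasurableSet A)
    (b b' : ℝ) (hb : (μ B).toReal = b) (hb' : (μ A).toReal = b')
    (hzero : ∀ᵐ x ∂μ, x ∉ A →
      (P (indicatorConstLp 2 hB (measure_ne_top μ B) (1 : ℝ)) : X → ℝ) x = 0) :
    b' ≥ b / (ρ ^ 2 * (1 - b) + b) := by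
  set f := indicatorConstLp 2 hB (measure_ne_top μ B) (1 : ℝ)
  have hsym : (P : Lp ℝ 2 μ →ₗ[ℝ] Lp ℝ 2 μ).IsSymmetric := hSA
  have hone_norm : ‖one‖ = 1 := by
    rw [← pow_eq_one_iff_of_nonneg (norm_nonneg _) two_ne_zero, ← real_inner_self_eq_norm_sq,
      hone, L2.real_inner_indicatorConstLp_one_indicatorConstLp_one, Set.inter_self, probReal_univ]
  have hf_one : ⟪f, one⟫ = b := by
    rw [hone, L2.real_inner_indicatorConstLp_one_indicatorConstLp_one, Set.inter_univ]
    exact hb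
  have hf_norm : ‖f‖ ^ 2 = b := by
    rw [← real_inner_self_eq_norm_sq, L2.real_inner_indicatorConstLp_one_indicatorConstLp_one,
      Set.inter_self]
    exact hb
  have hPf_integral : ∫ x, P f x ∂μ = b := by
    rw [← hf_one, real_inner_comm, ← hP1, hSA, hone, L2.inner_indicatorConstLp_one,
      Measure.restrict_univ]
  have hCS := L2.sq_integral_le_measureReal_mul_norm_sq (P f) hA (measure_ne_top μ A) hzero
  rw [hPf_integral, measureReal_def, hb'] at hCS
  have hgap : ‖P f‖ ^ 2 ≤ ρ ^ 2 * (b - b ^ 2) + b ^ 2 := by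
    simpa only [ContinuousLinearMap.coe_coe, hf_norm, hf_one] using
      hsym.norm_apply_sq_le_of_spectral_gap hone_norm hP1 hbound f
  have hb1 : b ≤ 1 := hb ▸ measureReal_le_one
  have hb'0 : 0 ≤ b' := hb' ▸ ENNReal.toReal_nonneg
  refine div_le_of_sq_le_mul_mul (hb ▸ ENNReal.toReal_nonneg) hb'0 (by nlinarith [sq_nonneg ρ]) ?_
  calc b ^ 2 ≤ b' * ‖P f‖ ^ 2 := hCS
    _ ≤ b' * (ρ ^ 2 * (b - b ^ 2) + b ^ 2) := by gcongr
    _ = b' * (b * (ρ ^ 2 * (1 - b) + b)) := by ring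

/-- Expansion lemma: let `P` be a self-adjoint Markov-type operator on `L²(X,μ)`
fixing constants, with norm at most `ρ` on the orthocomplement of constants and
preserving nonnegativity. If `B`, `A` are measurable with `μ B = b`, `μ A = b'`,
and `P 1_B = 0` a.e. off `A`, then `b' ≥ b / (ρ²(1−b) + b)`. -/
theorem neighbor_expansion
    {X : Type*} [MeasurableSpace X] (μ : Measure X) [IsProbabilityMeasure μ]
    (P : Lp ℝ 2 μ →L[ℝ] Lp ℝ 2 μ) (ρ : ℝ) (hρ : 0 ≤ ρ)
    (one : Lp ℝ 2 μ)
    (hone : one = indicatorConstLp 2 MeasurableSet.univ (measure_ne_top μ _) (1 : ℝ))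
    (hP1 : P one = one)
    (hSA : ∀ f g : Lp ℝ 2 μ, ⟪P f, g⟫ = ⟪f, P g⟫)
    (hbound : ∀ f : Lp ℝ 2 μ, ⟪f, one⟫ = 0 → ‖P f‖ ≤ ρ * ‖f‖)
    (hpos : ∀ f : Lp ℝ 2 μ, 0 ≤ f → 0 ≤ P f)
    (B A : Set X) (hB : MeasurableSet B) (hA : MeasurableSet A)
    (b b' : ℝ) (hb : (μ B).toReal = b) (hb' : (μ A).toReal = b')
    (hzero : ∀ᵐ x ∂μ, x ∉ A →
      (P (indicatorConstLp 2 hB (measure_ne_top μ B) (1 : ℝ)) : X → ℝ) x = 0)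
    (hden : 0 < ρ ^ 2 * (1 - b) + b) :
    b' ≥ b / (ρ ^ 2 * (1 - b) + b) :=
  neighbor_expansion_general μ P ρ one hone hP1 hSA hbound B A hB hA b b' hb hb' hzero
end

section
/- Let (X, μ) be a probability space and P a self-adjoint operator on L²(X, μ) with P1 = 1 and such that (Pf, f) ≥ −ρ₋ ‖f‖² for all f orthogonal to the constants, where 0 ≤ ρ₋. If B ⊆ X is measurable with μ(B) = b and (P 1_B, 1_B) = 0, then b ≤ ρ₋/(1 + ρ₋). -/
/-!
Test the lower spectral bound on `f = 1_B − b • 1`, which is orthogonal to the constants.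
Because `P 1 = 1`, `P` is self-adjoint and `⟪P 1_B, 1_B⟫ = 0`, one finds `⟪P f, f⟫ = −b²`, while
`‖f‖² = b (1 − b)`; hence `b² ≤ ρ₋ b (1 − b)`, which rearranges to `b ≤ ρ₋ / (1 + ρ₋)`.
-/

open MeasureTheory
open scoped RealInnerProductSpace

theorem le_div_one_add_of_sq_le_mul {r b : ℝ} (hr : 0 ≤ r) (hb : 0 ≤ b)
    (h : b ^ 2 ≤ r * (b - b ^ 2)) : b ≤ r / (1 + r) := by
  rw [le_div_iff₀ (by linarith)]
  rcases hb.eq_or_lt with rfl | hb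
  · simpa using hr
  · nlinarith

namespace LinearMap.IsSymmetric

variable {E : Type*} [NormedAddCommGroup E] [InnerProductSpace ℝ E] {T : E →ₗ[ℝ] E} {e x : E}

theorem inner_map_sub_smul_of_map_eq_self (hT : T.IsSymmetric) (he : T e = e) (c : ℝ) :
    ⟪T (x - c • e), x - c • e⟫ = ⟪T x, x⟫ - 2 * c * ⟪x, e⟫ + c ^ 2 * ⟪e, e⟫ := by
  have hTx : ⟪T x, e⟫ = ⟪x, e⟫ := by rw [hT, he]
  simp only [map_sub, map_smul, he, inner_sub_left, inner_sub_right, real_inner_smul_left,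
    real_inner_smul_right, hTx, real_inner_comm x e]
  ring

theorem norm_sq_le_of_inner_map_self_eq_zero (hT : T.IsSymmetric) (he : T e = e)
    (he_norm : ‖e‖ = 1) {r : ℝ} (hr : 0 ≤ r)
    (hbot : ∀ f : E, ⟪f, e⟫ = 0 → ⟪T f, f⟫ ≥ -r * ‖f‖ ^ 2)
    (hxe : ⟪x, e⟫ = ‖x‖ ^ 2) (hx : ⟪T x, x⟫ = 0) : ‖x‖ ^ 2 ≤ r / (1 + r) := by
  set b := ‖x‖ ^ 2
  have hee : ⟪e, e⟫ = 1 := by rw [real_inner_self_eq_norm_sq, he_norm, one_pow]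
  have h_orth : ⟪x - b • e, e⟫ = 0 := by
    rw [inner_sub_left, real_inner_smul_left, hxe, hee, mul_one, sub_self]
  have h_norm : ‖x - b • e‖ ^ 2 = b - b ^ 2 := by
    rw [norm_sub_sq_real, real_inner_smul_right, hxe, norm_smul, he_norm, mul_one,
      Real.norm_eq_abs, sq_abs]
    ring
  have h_form : ⟪T (x - b • e), x - b • e⟫ = -b ^ 2 := by
    rw [hT.inner_map_sub_smul_of_map_eq_self he, hx, hxe, hee]
    ring
  have := hbot _ h_orth
  rw [h_form, h_norm] at this
  exact le_div_one_add_of_sq_le_mul hr (sq_nonneg _) (by linarith)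

end LinearMap.IsSymmetric

/-- Hoffman-type bound for factors: if `P` is a self-adjoint Markov operator on
`L²(X,μ)` with `P 1 = 1` and `⟨Pf, f⟩ ≥ −ρ₋ ‖f‖²` for `f ⊥ 1` (`ρ₋ ≥ 0`), and
`B` is measurable with `μ B = b` and `⟨P 1_B, 1_B⟩ = 0`, then
`b ≤ ρ₋/(1 + ρ₋)`. -/
theorem hoffman_bound
    {X : Type*} [MeasurableSpace X] (μ : Measure X) [IsProbabilityMeasure μ]
    (P : Lp ℝ 2 μ →L[ℝ] Lp ℝ 2 μ) (rm : ℝ) (hrm : 0 ≤ rm)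
    (one : Lp ℝ 2 μ)
    (hone : one = indicatorConstLp 2 MeasurableSet.univ (measure_ne_top μ _) (1 : ℝ))
    (hP1 : P one = one)
    (hSA : ∀ f g : Lp ℝ 2 μ, ⟪P f, g⟫ = ⟪f, P g⟫)
    (hbot : ∀ f : Lp ℝ 2 μ, ⟪f, one⟫ = 0 → ⟪P f, f⟫ ≥ -rm * ‖f‖ ^ 2)
    (B : Set X) (hB : MeasurableSet B) (b : ℝ) (hb : (μ B).toReal = b)
    (hindep : ⟪P (indicatorConstLp 2 hB (measure_ne_top μ B) (1 : ℝ)),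
        indicatorConstLp 2 hB (measure_ne_top μ B) (1 : ℝ)⟫ = 0) :
    b ≤ rm / (1 + rm) := by
  set χ := indicatorConstLp 2 hB (measure_ne_top μ B) (1 : ℝ)
  have hone_norm : ‖one‖ = 1 := by simp [hone, Lp.norm_const]
  have hχ_sq : ‖χ‖ ^ 2 = b := by
    rw [← real_inner_self_eq_norm_sq, L2.real_inner_indicatorConstLp_one_indicatorConstLp_one,
      Set.inter_self, measureReal_def, hb]
  have hχ_one : ⟪χ, one⟫ = ‖χ‖ ^ 2 := by
    rw [hχ_sq, hone, L2.real_inner_indicatorConstLp_one_indicatorConstLp_one, Set.inter_univ,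
      measureReal_def, hb]
  rw [← hχ_sq]
  exact LinearMap.IsSymmetric.norm_sq_le_of_inner_map_self_eq_zero (T := P.toLinearMap)
    hSA hP1 hone_norm hrm hbot hχ_one hindep
end

section
/- In the setting of the Hoffman-type bound, equality b = ρ₋/(1+ρ₋) holds if and only if P f_B = −ρ₋ f_B, where f_B = 1_B − b·1. -/
/-!
Put `T = P + ρ₋ • 1` and `f_B = 1_B − b·1`. Since `⟪P 1_B, 1_B⟫ = 0`, a direct computation gives
`⟪T f_B, f_B⟫ = b (ρ₋ − b (1 + ρ₋))`, which vanishes exactly when `b = ρ₋/(1+ρ₋)`. The form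
`⟪T ·, ·⟫` is positive semidefinite on `1ᗮ`, which contains `f_B` and is `T`-invariant, so by the
equality case of Cauchy–Schwarz `⟪T f_B, f_B⟫ = 0` forces `T f_B = 0`.
-/

open MeasureTheory
open scoped RealInnerProductSpace

namespace LinearMap.IsSymmetric

variable {E : Type*} [NormedAddCommGroup E] [InnerProductSpace ℝ E] {T : E →ₗ[ℝ] E}
  {V : Submodule ℝ E}

/-- The equality case of Cauchy–Schwarz for the semi-inner product `⟪T ·, ·⟫` on `V`. -/
theorem inner_map_eq_zero_of_inner_map_self_eq_zero (hT : T.IsSymmetric)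
    (hpos : ∀ h ∈ V, 0 ≤ ⟪T h, h⟫) {f h : E} (hf : f ∈ V) (hh : h ∈ V)
    (hf0 : ⟪T f, f⟫ = 0) : ⟪T f, h⟫ = 0 := by
  have hquad : ∀ t : ℝ, 0 ≤ ⟪T h, h⟫ * (t * t) + 2 * ⟪T f, h⟫ * t + 0 := fun t ↦ by
    have hexpand :
        ⟪T (f + t • h), f + t • h⟫ = ⟪T h, h⟫ * (t * t) + 2 * ⟪T f, h⟫ * t + 0 := by
      simp only [map_add, map_smul, inner_add_left, inner_add_right, real_inner_smul_left,
        real_inner_smul_right, hf0, hT h f, real_inner_comm (T f) h]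
      ring
    exact hexpand ▸ hpos _ (V.add_mem hf (V.smul_mem t hh))
  have hdiscrim := discrim_le_zero hquad
  rw [discrim] at hdiscrim
  nlinarith [sq_nonneg ⟪T f, h⟫]

theorem map_eq_zero_of_inner_map_self_eq_zero (hT : T.IsSymmetric)
    (hpos : ∀ h ∈ V, 0 ≤ ⟪T h, h⟫) {f : E} (hf : f ∈ V) (hTf : T f ∈ V)
    (hf0 : ⟪T f, f⟫ = 0) : T f = 0 :=
  inner_self_eq_zero.mp (hT.inner_map_eq_zero_of_inner_map_self_eq_zero hpos hf hTf hf0)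

end LinearMap.IsSymmetric

section HoffmanBound

variable {E : Type*} [NormedAddCommGroup E] [InnerProductSpace ℝ E] {P : E →ₗ[ℝ] E}
  {e χ : E} {b ρ : ℝ}

theorem inner_add_smul_one_apply_sub_smul_self (hP : P.IsSymmetric) (he : ⟪e, e⟫ = 1)
    (hPe : P e = e) (hχe : ⟪χ, e⟫ = b) (hχ : ⟪χ, χ⟫ = b) (hPχ : ⟪P χ, χ⟫ = 0) :
    ⟪(P + ρ • 1) (χ - b • e), χ - b • e⟫ = b * (ρ - b * (1 + ρ)) := by
  have hPχe : ⟪P χ, e⟫ = b := by rw [hP, hPe, hχe]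
  simp only [LinearMap.add_apply, LinearMap.smul_apply, Module.End.one_apply, map_sub,
    map_smul, hPe, inner_add_left, inner_sub_left, inner_sub_right, real_inner_smul_left,
    real_inner_smul_right, real_inner_comm χ e, he, hχe, hχ, hPχ, hPχe]
  ring

theorem hoffman_bound_eq_iff (hP : P.IsSymmetric) (he : ⟪e, e⟫ = 1) (hPe : P e = e)
    (hbot : ∀ f : E, ⟪f, e⟫ = 0 → ⟪P f, f⟫ ≥ -ρ * ‖f‖ ^ 2) (hρ : 0 < ρ)
    (hχe : ⟪χ, e⟫ = b) (hχ : ⟪χ, χ⟫ = b) (hPχ : ⟪P χ, χ⟫ = 0) (hb : b ≠ 0) :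
    b = ρ / (1 + ρ) ↔ P (χ - b • e) = (-ρ) • (χ - b • e) := by
  set T := P + ρ • (1 : E →ₗ[ℝ] E)
  have hT : T.IsSymmetric := hP.add (LinearMap.IsSymmetric.one.smul (star_trivial ρ))
  have hpos : ∀ h ∈ (ℝ ∙ e)ᗮ, 0 ≤ ⟪T h, h⟫ := fun h hh ↦ by
    have := hbot h (Submodule.mem_orthogonal_singleton_iff_inner_left.mp hh)
    simp only [T, LinearMap.add_apply, LinearMap.smul_apply, Module.End.one_apply,
      inner_add_left, real_inner_smul_left, real_inner_self_eq_norm_sq]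
    linarith
  have hTV : ∀ h ∈ (ℝ ∙ e)ᗮ, T h ∈ (ℝ ∙ e)ᗮ := fun h hh ↦ by
    rw [Submodule.mem_orthogonal_singleton_iff_inner_left] at hh ⊢
    simp only [T, LinearMap.add_apply, LinearMap.smul_apply, Module.End.one_apply,
      inner_add_left, real_inner_smul_left, hP h e, hPe, hh, mul_zero, add_zero]
  have hf : χ - b • e ∈ (ℝ ∙ e)ᗮ := by
    rw [Submodule.mem_orthogonal_singleton_iff_inner_left, inner_sub_left,
      real_inner_smul_left, hχe, he, mul_one, sub_self]
  calc b = ρ / (1 + ρ) ↔ ⟪T (χ - b • e), χ - b • e⟫ = 0 := by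
        rw [inner_add_smul_one_apply_sub_smul_self hP he hPe hχe hχ hPχ, mul_eq_zero,
          or_iff_right hb, sub_eq_zero, eq_div_iff (by linarith), eq_comm]
    _ ↔ T (χ - b • e) = 0 :=
        ⟨hT.map_eq_zero_of_inner_map_self_eq_zero hpos hf (hTV _ hf),
          fun h ↦ by rw [h, inner_zero_left]⟩
    _ ↔ P (χ - b • e) = (-ρ) • (χ - b • e) := by
        rw [neg_smul, eq_neg_iff_add_eq_zero]
        rfl

end HoffmanBound

theorem hoffman_bound_equality_general
    {X : Type*} [MeasurableSpace X] (μ : Measure X) [IsProbabilityMeasure μ]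
    (P : Lp ℝ 2 μ →L[ℝ] Lp ℝ 2 μ) (rm : ℝ) (hrm : 0 < rm)
    (one : Lp ℝ 2 μ)
    (hone : one = indicatorConstLp 2 MeasurableSet.univ (measure_ne_top μ _) (1 : ℝ))
    (hP1 : P one = one)
    (hSA : ∀ f g : Lp ℝ 2 μ, ⟪P f, g⟫ = ⟪f, P g⟫)
    (hbot : ∀ f : Lp ℝ 2 μ, ⟪f, one⟫ = 0 → ⟪P f, f⟫ ≥ -rm * ‖f‖ ^ 2)
    (B : Set X) (hB : MeasurableSet B) (b : ℝ) (hb : (μ B).toReal = b)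
    (hb0 : 0 < b)
    (hindep : ⟪P (indicatorConstLp 2 hB (measure_ne_top μ B) (1 : ℝ)),
        indicatorConstLp 2 hB (measure_ne_top μ B) (1 : ℝ)⟫ = 0) :
    b = rm / (1 + rm) ↔
      P (indicatorConstLp 2 hB (measure_ne_top μ B) (1 : ℝ) - b • one) =
        (-rm) • (indicatorConstLp 2 hB (measure_ne_top μ B) (1 : ℝ) - b • one) := by
  have hone_one : ⟪one, one⟫ = 1 := by
    rw [hone, L2.inner_indicatorConstLp_one_indicatorConstLp_one, Set.inter_univ, probReal_univ]
    rfl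
  have hχ_one : ⟪indicatorConstLp 2 hB (measure_ne_top μ B) (1 : ℝ), one⟫ = b := by
    rw [hone, L2.inner_indicatorConstLp_one_indicatorConstLp_one, Set.inter_univ,
      measureReal_def, hb]
    rfl
  have hχ_χ : ⟪indicatorConstLp 2 hB (measure_ne_top μ B) (1 : ℝ),
      indicatorConstLp 2 hB (measure_ne_top μ B) (1 : ℝ)⟫ = b := by
    rw [L2.inner_indicatorConstLp_one_indicatorConstLp_one, Set.inter_self, measureReal_def, hb]
    rfl
  exact hoffman_bound_eq_iff (P := (P : Lp ℝ 2 μ →ₗ[ℝ] Lp ℝ 2 μ)) hSA hone_one hP1 hbot hrm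
    hχ_one hχ_χ hindep hb0.ne'

/-- Equality case in the Hoffman-type bound: `b = ρ₋/(1+ρ₋)` holds if and only
if `P f_B = −ρ₋ f_B`, where `f_B = 1_B − b·1`. -/
theorem hoffman_bound_equality
    {X : Type*} [MeasurableSpace X] (μ : Measure X) [IsProbabilityMeasure μ]
    (P : Lp ℝ 2 μ →L[ℝ] Lp ℝ 2 μ) (rm : ℝ) (hrm : 0 < rm)
    (one : Lp ℝ 2 μ)
    (hone : one = indicatorConstLp 2 MeasurableSet.univ (measure_ne_top μ _) (1 : ℝ))
    (hP1 : P one = one)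
    (hSA : ∀ f g : Lp ℝ 2 μ, ⟪P f, g⟫ = ⟪f, P g⟫)
    (hperp : ∀ f : Lp ℝ 2 μ, ⟪f, one⟫ = 0 → ⟪P f, one⟫ = 0)
    (hbot : ∀ f : Lp ℝ 2 μ, ⟪f, one⟫ = 0 → ⟪P f, f⟫ ≥ -rm * ‖f‖ ^ 2)
    (B : Set X) (hB : MeasurableSet B) (b : ℝ) (hb : (μ B).toReal = b)
    (hb0 : 0 < b) (hb1 : b < 1)
    (hindep : ⟪P (indicatorConstLp 2 hB (measure_ne_top μ B) (1 : ℝ)),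
        indicatorConstLp 2 hB (measure_ne_top μ B) (1 : ℝ)⟫ = 0) :
    b = rm / (1 + rm) ↔
      P (indicatorConstLp 2 hB (measure_ne_top μ B) (1 : ℝ) - b • one) =
        (-rm) • (indicatorConstLp 2 hB (measure_ne_top μ B) (1 : ℝ) - b • one) :=
  hoffman_bound_equality_general μ P rm hrm one hone hP1 hSA hbot B hB b hb hb0 hindep
end

section
/- Let (X, μ) be a probability space and P a self-adjoint operator on L² with P1 = 1 and ‖Pf‖ ≤ ρ‖f‖ for f ⊥ 1. For measurable sets B₁, B₂ ⊆ X with μ(Bᵢ) = bᵢ, one has |⟨1_{B₁}, P 1_{B₂}⟩ − b₁b₂| ≤ ρ √(b₁ b₂ (1−b₁)(1−b₂)). -/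
/-!
Split `1_{B₁}` and `1_{B₂}` into their means `bᵢ • 1` and their centred parts `gᵢ ⊥ 1`.
Since `P` is self-adjoint and fixes `1`, it maps `1^⊥` into itself, so the cross terms of
`⟪1_{B₁}, P 1_{B₂}⟫` vanish and it equals `b₁ b₂ + ⟪g₁, P g₂⟫`. Cauchy–Schwarz and the spectral
gap bound the last term by `ρ ‖g₁‖ ‖g₂‖`, and `‖gᵢ‖² = bᵢ - bᵢ² = bᵢ (1 - bᵢ)`.
-/

open MeasureTheory
open scoped RealInnerProductSpace

section Centring

variable {E : Type*} [NormedAddCommGroup E] [InnerProductSpace ℝ E] {e : E}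

lemma inner_sub_inner_smul_left_eq_zero (he : ⟪e, e⟫ = 1) (x : E) :
    ⟪x - ⟪x, e⟫ • e, e⟫ = 0 := by
  rw [inner_sub_left, real_inner_smul_left, he, mul_one, sub_self]

lemma inner_self_sub_inner_smul (he : ⟪e, e⟫ = 1) (x : E) :
    ⟪x - ⟪x, e⟫ • e, x - ⟪x, e⟫ • e⟫ = ⟪x, x⟫ - ⟪x, e⟫ ^ 2 := by
  simp only [inner_sub_left, inner_sub_right, real_inner_smul_left, real_inner_smul_right, he,
    real_inner_comm x e]
  ring

variable {P : E →ₗ[ℝ] E}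

lemma inner_map_eq_inner_map_sub_inner_smul_add (he : ⟪e, e⟫ = 1) (hPe : P e = e)
    (hP : P.IsSymmetric) (x y : E) :
    ⟪x, P y⟫ = ⟪x - ⟪x, e⟫ • e, P (y - ⟪y, e⟫ • e)⟫ + ⟪x, e⟫ * ⟪y, e⟫ := by
  have hPperp : ⟪e, P (y - ⟪y, e⟫ • e)⟫ = 0 := by
    rw [← hP, hPe, real_inner_comm, inner_sub_inner_smul_left_eq_zero he]
  simp only [map_sub, map_smul, hPe, inner_sub_left, inner_sub_right, real_inner_smul_left,
    real_inner_smul_right, he] at hPperp ⊢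
  linear_combination ⟪x, e⟫ * hPperp

theorem abs_inner_map_sub_inner_mul_inner_le (he : ⟪e, e⟫ = 1) (hPe : P e = e)
    (hP : P.IsSymmetric) {ρ : ℝ} (hρ : ∀ x : E, ⟪x, e⟫ = 0 → ‖P x‖ ≤ ρ * ‖x‖) (x y : E) :
    |⟪x, P y⟫ - ⟪x, e⟫ * ⟪y, e⟫| ≤
      ρ * Real.sqrt ((⟪x, x⟫ - ⟪x, e⟫ ^ 2) * (⟪y, y⟫ - ⟪y, e⟫ ^ 2)) := by
  set g₁ := x - ⟪x, e⟫ • e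
  set g₂ := y - ⟪y, e⟫ • e
  have hnorm (z : E) : ‖z - ⟪z, e⟫ • e‖ = Real.sqrt (⟪z, z⟫ - ⟪z, e⟫ ^ 2) := by
    rw [← inner_self_sub_inner_smul he, real_inner_self_eq_norm_sq, Real.sqrt_sq (norm_nonneg _)]
  calc |⟪x, P y⟫ - ⟪x, e⟫ * ⟪y, e⟫| = |⟪g₁, P g₂⟫| := by
        rw [inner_map_eq_inner_map_sub_inner_smul_add he hPe hP, add_sub_cancel_right]
    _ ≤ ‖g₁‖ * ‖P g₂‖ := abs_real_inner_le_norm _ _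
    _ ≤ ‖g₁‖ * (ρ * ‖g₂‖) := by
        gcongr
        exact hρ _ (inner_sub_inner_smul_left_eq_zero he y)
    _ = ρ * Real.sqrt ((⟪x, x⟫ - ⟪x, e⟫ ^ 2) * (⟪y, y⟫ - ⟪y, e⟫ ^ 2)) := by
        rw [hnorm, hnorm, Real.sqrt_mul (inner_self_sub_inner_smul he x ▸ real_inner_self_nonneg)]
        ring

end Centring

theorem expander_mixing_general
    {X : Type*} [MeasurableSpace X] (μ : Measure X) [IsProbabilityMeasure μ]
    (P : Lp ℝ 2 μ →L[ℝ] Lp ℝ 2 μ) (ρ : ℝ)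
    (one : Lp ℝ 2 μ)
    (hone : one = indicatorConstLp 2 MeasurableSet.univ (measure_ne_top μ _) (1 : ℝ))
    (hP1 : P one = one)
    (hSA : ∀ f g : Lp ℝ 2 μ, ⟪P f, g⟫ = ⟪f, P g⟫)
    (hbound : ∀ f : Lp ℝ 2 μ, ⟪f, one⟫ = 0 → ‖P f‖ ≤ ρ * ‖f‖)
    (B₁ B₂ : Set X) (hB₁ : MeasurableSet B₁) (hB₂ : MeasurableSet B₂)
    (b₁ b₂ : ℝ) (hb₁ : (μ B₁).toReal = b₁) (hb₂ : (μ B₂).toReal = b₂) :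
    |⟪indicatorConstLp 2 hB₁ (measure_ne_top μ B₁) (1 : ℝ),
        P (indicatorConstLp 2 hB₂ (measure_ne_top μ B₂) (1 : ℝ))⟫ - b₁ * b₂| ≤
      ρ * Real.sqrt (b₁ * b₂ * (1 - b₁) * (1 - b₂)) := by
  subst hone hb₁ hb₂
  have h := abs_inner_map_sub_inner_mul_inner_le (P := (P : Lp ℝ 2 μ →ₗ[ℝ] Lp ℝ 2 μ))
    (by rw [L2.real_inner_indicatorConstLp_one_indicatorConstLp_one, Set.inter_univ,
      probReal_univ]) hP1 hSA hbound
    (indicatorConstLp 2 hB₁ (measure_ne_top μ B₁) (1 : ℝ))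
    (indicatorConstLp 2 hB₂ (measure_ne_top μ B₂) (1 : ℝ))
  simp only [L2.real_inner_indicatorConstLp_one_indicatorConstLp_one, Set.inter_univ,
    Set.inter_self, measureReal_def, ContinuousLinearMap.coe_coe] at h
  convert h using 3
  ring

/-- Expander mixing-type bound: if `P` is self-adjoint on `L²(X,μ)` with
`P 1 = 1` and `‖Pf‖ ≤ ρ‖f‖` for `f ⊥ 1`, then for measurable `B₁, B₂` with
`μ Bᵢ = bᵢ`, `|⟨1_{B₁}, P 1_{B₂}⟩ − b₁b₂| ≤ ρ √(b₁b₂(1−b₁)(1−b₂))`. -/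
theorem expander_mixing
    {X : Type*} [MeasurableSpace X] (μ : Measure X) [IsProbabilityMeasure μ]
    (P : Lp ℝ 2 μ →L[ℝ] Lp ℝ 2 μ) (ρ : ℝ) (hρ : 0 ≤ ρ)
    (one : Lp ℝ 2 μ)
    (hone : one = indicatorConstLp 2 MeasurableSet.univ (measure_ne_top μ _) (1 : ℝ))
    (hP1 : P one = one)
    (hSA : ∀ f g : Lp ℝ 2 μ, ⟪P f, g⟫ = ⟪f, P g⟫)
    (hbound : ∀ f : Lp ℝ 2 μ, ⟪f, one⟫ = 0 → ‖P f‖ ≤ ρ * ‖f‖)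
    (B₁ B₂ : Set X) (hB₁ : MeasurableSet B₁) (hB₂ : MeasurableSet B₂)
    (b₁ b₂ : ℝ) (hb₁ : (μ B₁).toReal = b₁) (hb₂ : (μ B₂).toReal = b₂) :
    |⟪indicatorConstLp 2 hB₁ (measure_ne_top μ B₁) (1 : ℝ),
        P (indicatorConstLp 2 hB₂ (measure_ne_top μ B₂) (1 : ℝ))⟫ - b₁ * b₂| ≤
      ρ * Real.sqrt (b₁ * b₂ * (1 - b₁) * (1 - b₂)) :=
  expander_mixing_general μ P ρ one hone hP1 hSA hbound B₁ B₂ hB₁ hB₂ b₁ b₂ hb₁ hb₂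
end

section
/- Let (X, μ) be a probability space, S a finite set, and for each s ∈ S a measure-preserving map T_s : X → X. Suppose Φ ≥ 0 is such that for every measurable B with 0 < μ(B) < 1, (1/(|S| μ(B)(1−μ(B)))) ∑_{s∈S} μ(B ∩ T_s⁻¹(Bᶜ)) ≥ Φ. Then for any nonnegative f ∈ L²(X,μ), 2 μ({f = 0}) · Φ · ∫ f dμ ≤ (1/|S|) ∑_{s∈S} ∫ |f − f∘T_s| dμ. -/
/-! With `B_t = {f > t}`, the layer-cake formula gives `∫ f = ∫_0^∞ μ(B_t) dt`, and Tonelli on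
`{(x, t) | t lies between f x and f (T_s x)}` gives the co-area formula
`∫ |f - f ∘ T_s| = ∫_0^∞ μ(B_t ∆ T_s⁻¹ B_t) dt = 2 ∫_0^∞ μ(B_t ∩ T_s⁻¹ B_tᶜ) dt`,
the last step because `T_s` preserves `μ`. For `t > 0` the set `B_t` misses `{f = 0}`, so
`1 - μ(B_t) ≥ μ{f = 0}` and the expansion hypothesis bounds the average over `s` of
`μ(B_t ∩ T_s⁻¹ B_tᶜ)` below by `Φ μ{f = 0} μ(B_t)`. Integrating in `t` gives the claim. -/

open MeasureTheory

section

open Set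
open scoped ENNReal symmDiff

lemma volume_restrict_Ioi_Iio_symmDiff_Iio {a b : ℝ} (ha : 0 ≤ a) (hb : 0 ≤ b) :
    volume.restrict (Ioi 0) (Iio a ∆ Iio b) = ENNReal.ofReal |a - b| := by
  wlog hba : b ≤ a generalizing a b
  · rw [symmDiff_comm, abs_sub_comm]
    exact this hb ha (le_of_not_ge hba)
  rw [symmDiff_of_ge (Iio_subset_Iio hba), sdiff_eq, compl_Iio, inter_comm, Ici_inter_Iio,
    Measure.restrict_congr_set Ioi_ae_eq_Ici, Measure.restrict_apply measurableSet_Ico,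
    inter_eq_left.mpr (Ico_subset_Ici_self.trans (Ici_subset_Ici.mpr hb)), Real.volume_Ico,
    abs_of_nonneg (sub_nonneg.mpr hba)]

variable {X : Type*} [MeasurableSpace X]

lemma measurableSet_lt_symmDiff_lt {f g : X → ℝ} (hf : Measurable f) (hg : Measurable g) :
    MeasurableSet ({p : X × ℝ | p.2 < f p.1} ∆ {p | p.2 < g p.1}) :=
  (measurableSet_lt measurable_snd (hf.comp measurable_fst)).symmDiff
    (measurableSet_lt measurable_snd (hg.comp measurable_fst))

lemma measurable_measure_setOf_lt_symmDiff (μ : Measure X) [SFinite μ] {f g : X → ℝ}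
    (hf : Measurable f) (hg : Measurable g) :
    Measurable fun t => μ ({x | t < f x} ∆ {x | t < g x}) :=
  measurable_measure_prodMk_right (measurableSet_lt_symmDiff_lt hf hg)

lemma lintegral_ofReal_abs_sub_eq (μ : Measure X) [SFinite μ] {f g : X → ℝ}
    (hf : Measurable f) (hg : Measurable g) (hf0 : 0 ≤ f) (hg0 : 0 ≤ g) :
    ∫⁻ x, ENNReal.ofReal |f x - g x| ∂μ = ∫⁻ t in Ioi 0, μ ({x | t < f x} ∆ {x | t < g x}) := by
  have hE := measurableSet_lt_symmDiff_lt hf hg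
  calc ∫⁻ x, ENNReal.ofReal |f x - g x| ∂μ
      = ∫⁻ x, volume.restrict (Ioi 0) (Prod.mk x ⁻¹' _) ∂μ :=
        lintegral_congr fun x => (volume_restrict_Ioi_Iio_symmDiff_Iio (hf0 x) (hg0 x)).symm
    _ = μ.prod (volume.restrict (Ioi 0)) _ := (Measure.prod_apply hE).symm
    _ = _ := Measure.prod_apply_symm hE

lemma MeasureTheory.MeasurePreserving.measure_symmDiff_preimage {μ : Measure X}
    [IsFiniteMeasure μ] {T : X → X} (hT : MeasurePreserving T μ μ) {B : Set X}
    (hB : MeasurableSet B) :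
    μ (B ∆ (T ⁻¹' B)) = 2 * μ (B ∩ T ⁻¹' Bᶜ) := by
  have hTB : NullMeasurableSet (T ⁻¹' B) μ := (hT.measurable hB).nullMeasurableSet
  rw [measure_symmDiff_eq hB.nullMeasurableSet hTB,
    ← measure_sdiff_symm hB.nullMeasurableSet hTB (hT.measure_preimage hB.nullMeasurableSet).symm
      (measure_ne_top _ _), preimage_compl, ← sdiff_eq, two_mul]

def IsExpansionLowerBound {ι : Type*} (μ : Measure X) (S : Finset ι) (T : ι → X → X) (Φ : ℝ) :
    Prop :=
  ∀ B : Set X, MeasurableSet B → 0 < μ B → μ B < 1 →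
    Φ ≤ (1 / (S.card * (μ B).toReal * (1 - (μ B).toReal))) * ∑ s ∈ S, (μ (B ∩ T s ⁻¹' Bᶜ)).toReal

namespace IsExpansionLowerBound

variable {ι : Type*} {μ : Measure X} [IsProbabilityMeasure μ] {S : Finset ι} {T : ι → X → X}
  {Φ : ℝ}

lemma mul_toReal_mul_le (hΦ : IsExpansionLowerBound μ S T Φ) {B Z : Set X} (hB : MeasurableSet B)
    (hBZ : Disjoint B Z) (hΦZ : 0 < Φ * (μ Z).toReal) (hB0 : μ B ≠ 0) :
    Φ * (μ Z).toReal * (μ B).toReal ≤ (1 / S.card) * ∑ s ∈ S, (μ (B ∩ T s ⁻¹' Bᶜ)).toReal := by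
  set b := (μ B).toReal
  set c := (μ Z).toReal
  have hsum : μ B + μ Z ≤ 1 := measure_union' hBZ hB ▸ prob_le_one
  have hΦ0 : 0 < Φ := pos_of_mul_pos_left hΦZ ENNReal.toReal_nonneg
  have hc : 0 < c := pos_of_mul_pos_right hΦZ hΦ0.le
  have hB1 : μ B < 1 :=
    (ENNReal.lt_add_right (measure_ne_top μ B) (ENNReal.toReal_pos_iff.1 hc).1.ne').trans_le hsum
  have hbc : b + c ≤ 1 := by
    simpa [ENNReal.toReal_add] using ENNReal.toReal_mono ENNReal.one_ne_top hsum
  have hb : 0 < b := ENNReal.toReal_pos hB0 (measure_ne_top μ B)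
  have hb1 : 0 < b * (1 - b) := mul_pos hb (by linarith)
  calc Φ * c * b ≤ Φ * (b * (1 - b)) := by
        nlinarith [mul_le_mul_of_nonneg_left (show c ≤ 1 - b by linarith) (mul_pos hΦ0 hb).le]
    _ ≤ (1 / (S.card * b * (1 - b)) * ∑ s ∈ S, (μ (B ∩ T s ⁻¹' Bᶜ)).toReal) * (b * (1 - b)) :=
        mul_le_mul_of_nonneg_right (hΦ B hB (pos_iff_ne_zero.2 hB0) hB1) hb1.le
    _ = (1 / S.card) * (∑ s ∈ S, (μ (B ∩ T s ⁻¹' Bᶜ)).toReal) *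
          ((b * (1 - b))⁻¹ * (b * (1 - b))) := by
        rw [mul_assoc (S.card : ℝ), ← one_div_mul_one_div]
        ring
    _ = _ := by rw [inv_mul_cancel₀ hb1.ne', mul_one]

lemma two_mul_measure_le (hΦ : IsExpansionLowerBound μ S T Φ)
    (hT : ∀ s ∈ S, MeasurePreserving (T s) μ μ) {B Z : Set X} (hB : MeasurableSet B)
    (hBZ : Disjoint B Z) :
    2 * ENNReal.ofReal (Φ * (μ Z).toReal) * μ B ≤
      ENNReal.ofReal (1 / S.card) * ∑ s ∈ S, μ (B ∆ (T s ⁻¹' B)) := by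
  rcases le_or_gt (Φ * (μ Z).toReal) 0 with hΦZ | hΦZ
  · simp [ENNReal.ofReal_of_nonpos hΦZ]
  rcases eq_or_ne (μ B) 0 with hB0 | hB0
  · simp [hB0]
  calc 2 * ENNReal.ofReal (Φ * (μ Z).toReal) * μ B
      = 2 * ENNReal.ofReal (Φ * (μ Z).toReal * (μ B).toReal) := by
        rw [mul_assoc, ENNReal.ofReal_mul hΦZ.le, ENNReal.ofReal_toReal (measure_ne_top μ B)]
    _ ≤ 2 * ENNReal.ofReal ((1 / S.card) * ∑ s ∈ S, (μ (B ∩ T s ⁻¹' Bᶜ)).toReal) := by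
        gcongr 2 * ENNReal.ofReal ?_
        exact hΦ.mul_toReal_mul_le hB hBZ hΦZ hB0
    _ = ENNReal.ofReal (1 / S.card) * ∑ s ∈ S, μ (B ∆ (T s ⁻¹' B)) := by
        rw [ENNReal.ofReal_mul (by positivity),
          ENNReal.ofReal_sum_of_nonneg fun _ _ => ENNReal.toReal_nonneg, mul_left_comm,
          Finset.mul_sum]
        congr 1
        refine Finset.sum_congr rfl fun s hs => ?_
        rw [ENNReal.ofReal_toReal (measure_ne_top μ _),
          ← (hT s hs).measure_symmDiff_preimage hB]

theorem level_set_expansion_of_measurable (hΦ : IsExpansionLowerBound μ S T Φ)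
    (hT : ∀ s ∈ S, MeasurePreserving (T s) μ μ) {f : X → ℝ} (hf : Measurable f) (hf0 : 0 ≤ f)
    (hfi : Integrable f μ) :
    2 * (μ {x | f x = 0}).toReal * Φ * ∫ x, f x ∂μ ≤
      (1 / S.card) * ∑ s ∈ S, ∫ x, |f x - f (T s x)| ∂μ := by
  have hcoarea : ∀ s ∈ S, ENNReal.ofReal (∫ x, |f x - f (T s x)| ∂μ) =
      ∫⁻ t in Ioi 0, μ ({x | t < f x} ∆ (T s ⁻¹' {x | t < f x})) := fun s hs => by
    have hint : Integrable (fun x => |f x - f (T s x)|) μ :=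
      (hfi.sub ((hT s hs).integrable_comp_of_integrable hfi)).abs
    rw [ofReal_integral_eq_lintegral_ofReal hint (ae_of_all _ fun _ => abs_nonneg _)]
    exact lintegral_ofReal_abs_sub_eq μ hf (hf.comp (hT s hs).measurable) hf0 fun x => hf0 (T s x)
  have hlayer : ENNReal.ofReal (∫ x, f x ∂μ) = ∫⁻ t in Ioi 0, μ {x | t < f x} := by
    rw [ofReal_integral_eq_lintegral_ofReal hfi (ae_of_all _ hf0)]
    exact lintegral_eq_lintegral_meas_lt μ (ae_of_all _ hf0) hf.aemeasurable
  have hmeas : ∀ s ∈ S, Measurable fun t => μ ({x | t < f x} ∆ (T s ⁻¹' {x | t < f x})) :=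
    fun s hs => measurable_measure_setOf_lt_symmDiff μ hf (hf.comp (hT s hs).measurable)
  have hdisj : ∀ t ∈ Ioi (0 : ℝ), Disjoint {x | t < f x} {x | f x = 0} :=
    fun t ht => disjoint_left.2 fun x hlt hzero => (hlt.trans_eq hzero).not_gt ht
  rw [← ENNReal.ofReal_le_ofReal_iff (mul_nonneg (by positivity)
    (Finset.sum_nonneg fun _ _ => integral_nonneg fun _ => abs_nonneg _))]
  calc ENNReal.ofReal (2 * (μ {x | f x = 0}).toReal * Φ * ∫ x, f x ∂μ)
      = ∫⁻ t in Ioi 0, 2 * ENNReal.ofReal (Φ * (μ {x | f x = 0}).toReal) * μ {x | t < f x} := by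
        rw [lintegral_const_mul' _ _ (by finiteness), ← hlayer, ← ENNReal.ofReal_ofNat 2,
          ← ENNReal.ofReal_mul zero_le_two, ← ENNReal.ofReal_mul' (integral_nonneg hf0)]
        congr 1
        ring
    _ ≤ ∫⁻ t in Ioi 0, ENNReal.ofReal (1 / S.card) *
          ∑ s ∈ S, μ ({x | t < f x} ∆ (T s ⁻¹' {x | t < f x})) :=
        setLIntegral_mono' measurableSet_Ioi fun t ht =>
          hΦ.two_mul_measure_le hT (measurableSet_lt measurable_const hf) (hdisj t ht)
    _ = ENNReal.ofReal (1 / S.card) * ∑ s ∈ S, ENNReal.ofReal (∫ x, |f x - f (T s x)| ∂μ) := by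
        rw [lintegral_const_mul _ (Finset.measurable_sum S hmeas), lintegral_finsetSum S hmeas,
          Finset.sum_congr rfl hcoarea]
    _ = ENNReal.ofReal ((1 / S.card) * ∑ s ∈ S, ∫ x, |f x - f (T s x)| ∂μ) := by
        rw [ENNReal.ofReal_mul (by positivity),
          ENNReal.ofReal_sum_of_nonneg fun _ _ => integral_nonneg fun _ => abs_nonneg _]

end IsExpansionLowerBound

end

theorem level_set_expansion_general
    {X : Type*} [MeasurableSpace X] (μ : Measure X) [IsProbabilityMeasure μ]
    {ι : Type*} (S : Finset ι) (T : ι → X → X)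
    (hT : ∀ s ∈ S, MeasurePreserving (T s) μ μ)
    (Φ : ℝ)
    (hΦ : ∀ B : Set X, MeasurableSet B → 0 < μ B → μ B < 1 →
      Φ ≤ (1 / (S.card * (μ B).toReal * (1 - (μ B).toReal))) *
        ∑ s ∈ S, (μ (B ∩ T s ⁻¹' Bᶜ)).toReal)
    (f : X → ℝ) (hf : ∀ x, 0 ≤ f x) (hfm : MemLp f 2 μ) :
    2 * (μ {x | f x = 0}).toReal * Φ * ∫ x, f x ∂μ ≤
      (1 / S.card) * ∑ s ∈ S, ∫ x, |f x - f (T s x)| ∂μ := by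
  obtain ⟨g, hgm, hg0, hfg⟩ :=
    hfm.aestronglyMeasurable.aemeasurable.exists_measurable_nonneg (ae_of_all _ hf)
  have hzero : μ {x | f x = 0} = μ {x | g x = 0} := measure_congr (hfg.fun_comp (· = 0))
  have hdiff : ∀ s ∈ S, ∫ x, |f x - f (T s x)| ∂μ = ∫ x, |g x - g (T s x)| ∂μ := fun s hs =>
    integral_congr_ae ((hfg.sub ((hT s hs).quasiMeasurePreserving.ae_eq_comp hfg)).fun_comp abs)
  rw [hzero, integral_congr_ae hfg, Finset.sum_congr rfl hdiff]
  exact IsExpansionLowerBound.level_set_expansion_of_measurable hΦ hT hgm hg0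
    ((hfm.integrable one_le_two).congr hfg)

/-- Level-set (co-area) lemma: if `Φ` is a lower bound for the expansion
constant of a family of measure-preserving maps `(T_s)_{s ∈ S}`, then for every
nonnegative `f ∈ L²`,
`2 μ{f = 0} Φ ∫ f ≤ (1/|S|) ∑_s ∫ |f − f∘T_s|`. -/
theorem level_set_expansion
    {X : Type*} [MeasurableSpace X] (μ : Measure X) [IsProbabilityMeasure μ]
    {ι : Type*} (S : Finset ι) (hS : S.Nonempty) (T : ι → X → X)
    (hT : ∀ s ∈ S, MeasurePreserving (T s) μ μ)
    (Φ : ℝ) (hΦ0 : 0 ≤ Φ)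
    (hΦ : ∀ B : Set X, MeasurableSet B → 0 < μ B → μ B < 1 →
      Φ ≤ (1 / (S.card * (μ B).toReal * (1 - (μ B).toReal))) *
        ∑ s ∈ S, (μ (B ∩ T s ⁻¹' Bᶜ)).toReal)
    (f : X → ℝ) (hf : ∀ x, 0 ≤ f x) (hfm : MemLp f 2 μ) :
    2 * (μ {x | f x = 0}).toReal * Φ * ∫ x, f x ∂μ ≤
      (1 / S.card) * ∑ s ∈ S, ∫ x, |f x - f (T s x)| ∂μ :=
  level_set_expansion_general μ S T hT Φ hΦ f hf hfm
end

section
/- Let m ∈ ℝ, k ∈ ℤ, d ∈ ℕ with d ≥ 1, and suppose k/d < m < (k+1)/d. If a random variable Q takes values in {k/d, (k+1)/d} with mean m, then its variance equals −(k + k²)/d² + (1 + 2k)m/d − m², and this is the minimal variance among all random variables with mean m taking values in (1/d)·ℤ ∩ [0,1]. -/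
/-!
On the lattice `(1/d)ℤ` the quadratic `(x - k/d)(x - (k+1)/d)` is nonnegative, since no lattice
point lies strictly between its two roots, and it vanishes exactly at those roots. Its expectation
is `E[Q²] - (2k+1)/d · m + (k+k²)/d²`, so it is nonnegative, and it is zero exactly when `Q` is
a.s. one of the two roots.
-/

open MeasureTheory

lemma Int.cast_sub_mul_sub_add_one_nonneg (j k : ℤ) :
    0 ≤ ((j : ℝ) - k) * ((j : ℝ) - (k + 1)) := by
  have hint : 0 ≤ (j - k) * (j - (k + 1)) := by
    rcases le_or_gt j k with h | h <;> nlinarith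
  exact_mod_cast hint

lemma int_div_sub_mul_int_div_sub_add_one_nonneg (j k : ℤ) (d : ℝ) :
    0 ≤ ((j : ℝ) / d - k / d) * ((j : ℝ) / d - (k + 1) / d) := by
  rw [div_sub_div_same, div_sub_div_same, div_mul_div_comm]
  exact div_nonneg (Int.cast_sub_mul_sub_add_one_nonneg j k) (mul_self_nonneg d)

section TwoPoint

variable {Ω : Type*} [MeasurableSpace Ω] {P : Measure Ω} [IsProbabilityMeasure P]
  {Q : Ω → ℝ}

lemma integral_sub_mul_sub (hQ : MemLp Q 2 P) (a b : ℝ) :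
    ∫ ω, (Q ω - a) * (Q ω - b) ∂P = (∫ ω, Q ω ^ 2 ∂P) - (a + b) * ∫ ω, Q ω ∂P + a * b := by
  have hQ1 : Integrable Q P := hQ.integrable one_le_two
  have hQ2 : Integrable (fun ω => Q ω ^ 2) P := hQ.integrable_sq
  have hexpand : (fun ω => (Q ω - a) * (Q ω - b)) =
      fun ω => Q ω ^ 2 - (a + b) * Q ω + a * b := by
    ext ω; ring
  have hlin : Integrable (fun ω => Q ω ^ 2 - (a + b) * Q ω) P := hQ2.sub (hQ1.const_mul _)
  rw [hexpand, integral_add hlin (integrable_const _),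
    integral_sub hQ2 (hQ1.const_mul _), integral_const_mul, integral_const]
  simp

lemma integral_sq_ge_and_eq_iff_of_ae_sub_mul_sub_nonneg (hQ : MemLp Q 2 P) {a b : ℝ}
    (hab : ∀ᵐ ω ∂P, 0 ≤ (Q ω - a) * (Q ω - b)) :
    (a + b) * (∫ ω, Q ω ∂P) - a * b ≤ ∫ ω, Q ω ^ 2 ∂P ∧
      ((∫ ω, Q ω ^ 2 ∂P) = (a + b) * (∫ ω, Q ω ∂P) - a * b ↔
        ∀ᵐ ω ∂P, Q ω = a ∨ Q ω = b) := by
  have hint := integral_sub_mul_sub hQ a b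
  have hzero_iff : ∫ ω, (Q ω - a) * (Q ω - b) ∂P = 0 ↔
      ∀ᵐ ω ∂P, (Q ω - a) * (Q ω - b) = 0 :=
    integral_eq_zero_iff_of_nonneg_ae hab
      ((hQ.sub (memLp_const a)).integrable_mul (hQ.sub (memLp_const b)))
  have hroots : ∀ x : ℝ, (x - a) * (x - b) = 0 ↔ x = a ∨ x = b := by
    simp only [mul_eq_zero, sub_eq_zero, implies_true]
  refine ⟨?_, ?_⟩
  · linarith [integral_nonneg_of_ae hab]
  · simp only [← hroots]
    rw [← hzero_iff]
    constructor <;> intro h <;> linarith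

end TwoPoint

theorem min_variance_two_point_general
    {Ω : Type*} [MeasurableSpace Ω] (P : Measure Ω) [IsProbabilityMeasure P]
    (d : ℕ) (k : ℤ) (m : ℝ)
    (Q : Ω → ℝ) (hQ : MemLp Q 2 P)
    (hvals : ∀ᵐ ω ∂P, ∃ j : ℤ, 0 ≤ j ∧ j ≤ (d : ℤ) ∧ Q ω = (j : ℝ) / d)
    (hmean : ∫ ω, Q ω ∂P = m) :
    (-(((k : ℝ) + (k : ℝ) ^ 2) / (d : ℝ) ^ 2) + (1 + 2 * (k : ℝ)) * m / d - m ^ 2 ≤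
        (∫ ω, Q ω ^ 2 ∂P) - m ^ 2) ∧
      ((∫ ω, Q ω ^ 2 ∂P) - m ^ 2 =
          -(((k : ℝ) + (k : ℝ) ^ 2) / (d : ℝ) ^ 2) + (1 + 2 * (k : ℝ)) * m / d - m ^ 2 ↔
        ∀ᵐ ω ∂P, Q ω = (k : ℝ) / d ∨ Q ω = ((k : ℝ) + 1) / d) := by
  have hnonneg : ∀ᵐ ω ∂P, 0 ≤ (Q ω - k / d) * (Q ω - (k + 1) / d) := by
    filter_upwards [hvals] with ω ⟨j, _, _, hj⟩
    rw [hj]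
    exact int_div_sub_mul_int_div_sub_add_one_nonneg j k d
  have hsum : ((k : ℝ) / d + (k + 1) / d) * m = (1 + 2 * k) * m / d := by ring
  have hprod : (k : ℝ) / d * ((k + 1) / d) = (k + k ^ 2) / (d : ℝ) ^ 2 := by ring
  obtain ⟨hle, heq_iff⟩ := integral_sq_ge_and_eq_iff_of_ae_sub_mul_sub_nonneg hQ hnonneg
  rw [hmean, hsum, hprod] at hle heq_iff
  rw [← heq_iff]
  constructor
  · linarith
  · constructor <;> intro h <;> linarith

/-- Minimal variance of a `(1/d)ℤ ∩ [0,1]`-valued random variable with mean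
`m ∈ (k/d, (k+1)/d)`: its variance is at least
`−(k+k²)/d² + (1+2k)m/d − m²`, with equality iff it takes only the values
`k/d` and `(k+1)/d` almost surely. -/
theorem min_variance_two_point
    {Ω : Type*} [MeasurableSpace Ω] (P : Measure Ω) [IsProbabilityMeasure P]
    (d : ℕ) (hd : 1 ≤ d) (k : ℤ) (m : ℝ)
    (Q : Ω → ℝ) (hQ : MemLp Q 2 P)
    (hvals : ∀ᵐ ω ∂P, ∃ j : ℤ, 0 ≤ j ∧ j ≤ (d : ℤ) ∧ Q ω = (j : ℝ) / d)
    (hmean : ∫ ω, Q ω ∂P = m)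
    (h1 : (k : ℝ) / d < m) (h2 : m < ((k : ℝ) + 1) / d) :
    (-(((k : ℝ) + (k : ℝ) ^ 2) / (d : ℝ) ^ 2) + (1 + 2 * (k : ℝ)) * m / d - m ^ 2 ≤
        (∫ ω, Q ω ^ 2 ∂P) - m ^ 2) ∧
      ((∫ ω, Q ω ^ 2 ∂P) - m ^ 2 =
          -(((k : ℝ) + (k : ℝ) ^ 2) / (d : ℝ) ^ 2) + (1 + 2 * (k : ℝ)) * m / d - m ^ 2 ↔
        ∀ᵐ ω ∂P, Q ω = (k : ℝ) / d ∨ Q ω = ((k : ℝ) + 1) / d) :=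
  min_variance_two_point_general P d k m Q hQ hvals hmean
end

section
/- Let G be an infinite locally finite connected simple graph and let (ω(e))_{e ∈ E(G)} be independent uniform [0,1] random variables on the edges. Define ξ(x) := (∑_{e ∋ x} ω(e)) mod 1 for each vertex x. Then the family (ξ(x))_{x ∈ V(G)} is a collection of independent uniform [0,1] random variables. -/
/-!
Fix finitely many vertices `S`. Since `G` is connected and infinite, some `x ∈ S` has an edge `e`
leading out of `S`; this edge is incident to no other vertex of `S`. Hence `ξ x = fract (ω e + R)`
where `R` and all `ξ y`, `y ∈ S \ {x}`, are functions of the labels of edges other than `e`, which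
are independent of `ω e`. Adding an independent uniform variable mod 1 produces a uniform variable
independent of everything else, so `ξ x` is uniform and independent of `(ξ y)_{y ∈ S \ {x}}`;
induction on `S` finishes the proof.
-/

open MeasureTheory
open scoped Classical

/-- Given uniform labels `ω e` on the edges of a locally finite graph, the value
`ξ x := (∑_{e ∋ x} ω e) mod 1` at a vertex `x`. -/
noncomputable def vertexLabel {V : Type*} [DecidableEq V] (G : SimpleGraph V)
    [G.LocallyFinite] {Ω : Type*} (ω : G.edgeSet → Ω → ℝ) (x : V) (a : Ω) : ℝ :=
  Int.fract (∑ e ∈ G.incidenceFinset x,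
    if h : e ∈ G.edgeSet then ω ⟨e, h⟩ a else 0)

open ProbabilityTheory Set

/-- `Int.fract` factors through `ℝ ⧸ ℤ`, whose Haar measure is translation invariant. -/
theorem map_fract_add_volume_Icc (c : ℝ) :
    (volume.restrict (Icc (0 : ℝ) 1)).map (fun u => Int.fract (u + c)) =
      volume.restrict (Icc 0 1) := by
  set F : UnitAddCircle → ℝ := fun z => AddCircle.equivIco 1 0 z
  have hF : Measurable F :=
    measurable_subtype_coe.comp (AddCircle.measurableEquivIco 1 0).measurable
  have hπ : (volume.restrict (Icc (0 : ℝ) 1)).map (↑) = (volume : Measure UnitAddCircle) := by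
    rw [Measure.restrict_congr_set Ioc_ae_eq_Icc.symm]
    simpa using (UnitAddCircle.measurePreserving_mk 0).map_eq
  have hfract : ∀ x : ℝ, Int.fract x = F x := fun x => by simp [F]
  calc (volume.restrict (Icc (0 : ℝ) 1)).map (fun u => Int.fract (u + c))
      = (((volume.restrict (Icc (0 : ℝ) 1)).map (↑)).map (· + (c : UnitAddCircle))).map F := by
        rw [Measure.map_map hF (by fun_prop), Measure.map_map (by fun_prop) (by fun_prop)]
        congr 1
        funext u
        exact hfract (u + c)
    _ = ((volume.restrict (Icc (0 : ℝ) 1)).map (↑)).map F := by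
        rw [hπ, map_add_right_eq_self]
    _ = (volume.restrict (Icc (0 : ℝ) 1)).map Int.fract := by
        rw [Measure.map_map hF (by fun_prop)]
        exact congrArg (Measure.map · _) (funext hfract).symm
    _ = volume.restrict (Icc 0 1) := by
        rw [Measure.restrict_congr_set Ico_ae_eq_Icc.symm]
        conv_rhs => rw [← Measure.map_id (μ := volume.restrict (Ico (0:ℝ) 1))]
        exact Measure.map_congr (ae_restrict_of_forall_mem measurableSet_Ico
          fun u hu => Int.fract_eq_self.2 hu)

theorem indepFun_fract_add {Ω β : Type*} {mΩ : MeasurableSpace Ω} {P : Measure Ω}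
    [IsProbabilityMeasure P] [mβ : MeasurableSpace β] {U : Ω → ℝ} {W : Ω → β} {g : β → ℝ}
    (hU : Measurable U) (hW : Measurable W) (hg : Measurable g) (hUW : IndepFun U W P)
    (hunif : P.map U = volume.restrict (Icc 0 1)) :
    IndepFun W (fun a => Int.fract (U a + g (W a))) P ∧
      P.map (fun a => Int.fract (U a + g (W a))) = volume.restrict (Icc 0 1) := by
  have : IsProbabilityMeasure (P.map W) := Measure.isProbabilityMeasure_map hW.aemeasurable
  set φ : β × ℝ → β × ℝ := fun p => (p.1, Int.fract (p.2 + g p.1))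
  have hφ : MeasurePreserving φ ((P.map W).prod (volume.restrict (Icc 0 1)))
      ((P.map W).prod (volume.restrict (Icc 0 1))) :=
    (MeasurePreserving.id _).skew_product (by fun_prop)
      (Filter.Eventually.of_forall fun w => map_fract_add_volume_Icc (g w))
  have hjoint : P.map (fun a => (W a, Int.fract (U a + g (W a)))) =
      (P.map W).prod (volume.restrict (Icc 0 1)) := by
    rw [← hφ.map_eq, ← hunif,
      ← hUW.symm.map_prod_eq_prod_map_map hW.aemeasurable hU.aemeasurable,
      Measure.map_map (by fun_prop) (by fun_prop)]
    rfl
  have hmarg : P.map (fun a => Int.fract (U a + g (W a))) = volume.restrict (Icc 0 1) := by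
    rw [← Measure.snd_prod (μ := P.map W) (ν := volume.restrict (Icc (0 : ℝ) 1)), ← hjoint,
      Measure.snd_map_prodMk hW]
  refine ⟨?_, hmarg⟩
  rw [indepFun_iff_map_prod_eq_prod_map_map hW.aemeasurable (by fun_prop), hjoint, hmarg]

theorem indep_comap_fract_add {Ω : Type*} {m mΩ : MeasurableSpace Ω} {P : Measure Ω}
    [IsProbabilityMeasure P] (hm : m ≤ mΩ) {U R : Ω → ℝ} (hU : Measurable U)
    (hR : Measurable[m] R) (hUm : Indep (MeasurableSpace.comap U inferInstance) m P)
    (hunif : P.map U = volume.restrict (Icc 0 1)) :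
    Indep (MeasurableSpace.comap (fun a => Int.fract (U a + R a)) inferInstance) m P ∧
      P.map (fun a => Int.fract (U a + R a)) = volume.restrict (Icc 0 1) := by
  -- `indepFun_fract_add` applied to the identity `(Ω, mΩ) → (Ω, m)`
  have hUid : @IndepFun Ω ℝ Ω mΩ _ m U id P :=
    (IndepFun_iff_Indep (mγ := m) _ _ _).2 (by rwa [MeasurableSpace.comap_id])
  obtain ⟨hind, hmap⟩ := indepFun_fract_add (mβ := m) hU (measurable_id'' hm) hR hUid hunif
  refine ⟨?_, hmap⟩
  have hind' := (IndepFun_iff_Indep (mβ := m) _ _ _).1 hind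
  rw [MeasurableSpace.comap_id] at hind'
  exact hind'.symm

section

variable {Ω ι : Type*} {mΩ : MeasurableSpace Ω} {P : Measure Ω} {ω : ι → Ω → ℝ}

theorem measurable_sum_iSup_comap {T : Set ι} {t : Finset ι} (ht : ↑t ⊆ T) :
    Measurable[⨆ i ∈ T, MeasurableSpace.comap (ω i) inferInstance] (fun a => ∑ i ∈ t, ω i a) :=
  Finset.measurable_sum t fun i hi => Measurable.of_comap_le (le_iSup₂ (f := fun i (_ : i ∈ T) =>
    MeasurableSpace.comap (ω i) inferInstance) i (ht hi))

theorem indep_comap_fract_sum [IsProbabilityMeasure P] (hmeas : ∀ i, Measurable (ω i))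
    (hindep : iIndepFun ω P) (hunif : ∀ i, P.map (ω i) = volume.restrict (Icc 0 1))
    {t : Finset ι} {e : ι} (he : e ∈ t) :
    Indep (MeasurableSpace.comap (fun a => Int.fract (∑ i ∈ t, ω i a)) inferInstance)
        (⨆ i ∈ ({e}ᶜ : Set ι), MeasurableSpace.comap (ω i) inferInstance) P ∧
      P.map (fun a => Int.fract (∑ i ∈ t, ω i a)) = volume.restrict (Icc 0 1) := by
  have hle : ∀ i, MeasurableSpace.comap (ω i) inferInstance ≤ mΩ := fun i => (hmeas i).comap_le
  have hfresh := indep_iSup_of_disjoint hle hindep.iIndep (disjoint_compl_right (a := {e}))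
  rw [iSup_singleton] at hfresh
  simp_rw [← Finset.add_sum_erase t _ he]
  exact indep_comap_fract_add (iSup₂_le fun i _ => hle i) (hmeas e)
    (measurable_sum_iSup_comap fun i hi => Finset.ne_of_mem_erase hi) hfresh (hunif e)

theorem iIndepFun_fract_sum [IsProbabilityMeasure P] (hmeas : ∀ i, Measurable (ω i))
    (hindep : iIndepFun ω P) (hunif : ∀ i, P.map (ω i) = volume.restrict (Icc 0 1))
    {κ : Type*} (N : κ → Finset ι)
    (hprivate : ∀ S : Finset κ, S.Nonempty → ∃ x ∈ S, ∃ e ∈ N x, ∀ y ∈ S, y ≠ x → e ∉ N y) :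
    iIndepFun (fun k a => Int.fract (∑ i ∈ N k, ω i a)) P ∧
      ∀ k, P.map (fun a => Int.fract (∑ i ∈ N k, ω i a)) = volume.restrict (Icc 0 1) := by
  set ξ : κ → Ω → ℝ := fun k a => Int.fract (∑ i ∈ N k, ω i a)
  refine ⟨?_, fun k => ?_⟩
  · rw [iIndepFun_iff_measure_inter_preimage_eq_mul]
    intro S
    induction S using Finset.strongInduction with
    | H S ih =>
      intro B hB
      rcases S.eq_empty_or_nonempty with rfl | hS
      · simp
      obtain ⟨x, hx, e, he, hnot⟩ := hprivate S hS
      set m := ⨆ i ∈ ({e}ᶜ : Set ι), MeasurableSpace.comap (ω i) inferInstance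
      have hrest : MeasurableSet[m] (⋂ y ∈ S.erase x, ξ y ⁻¹' B y) :=
        MeasurableSet.biInter (S.erase x).countable_toSet fun y hy =>
          (measurable_sum_iSup_comap (T := {e}ᶜ) (t := N y) fun i hi hie =>
            hnot y (Finset.mem_of_mem_erase hy) (Finset.ne_of_mem_erase hy) (hie ▸ hi)).fract
            (hB y (Finset.mem_of_mem_erase hy))
      calc P (⋂ y ∈ S, ξ y ⁻¹' B y)
          = P (ξ x ⁻¹' B x ∩ ⋂ y ∈ S.erase x, ξ y ⁻¹' B y) := by
            rw [← Finset.insert_erase hx, Finset.set_biInter_insert, Finset.erase_insert_eq_erase,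
              Finset.erase_idem]
        _ = P (ξ x ⁻¹' B x) * ∏ y ∈ S.erase x, P (ξ y ⁻¹' B y) := by
            rw [(Indep_iff _ _ _).1 (indep_comap_fract_sum hmeas hindep hunif he).1 _ _
                ⟨B x, hB x hx, rfl⟩ hrest,
              ih _ (Finset.erase_ssubset hx) fun y hy => hB y (Finset.mem_of_mem_erase hy)]
        _ = ∏ y ∈ S, P (ξ y ⁻¹' B y) := Finset.mul_prod_erase S (fun y => P (ξ y ⁻¹' B y)) hx
  · obtain ⟨_, hk, e, he, -⟩ := hprivate {k} (Finset.singleton_nonempty k)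
    rw [Finset.mem_singleton.1 hk] at he
    exact (indep_comap_fract_sum hmeas hindep hunif he).2

end

namespace SimpleGraph

variable {V : Type*} {G : SimpleGraph V}

theorem Preconnected.exists_adj_of_mem_of_notMem (hG : G.Preconnected) {S : Set V} {u v : V}
    (hu : u ∈ S) (hv : v ∉ S) : ∃ x ∈ S, ∃ y ∉ S, G.Adj x y := by
  obtain ⟨p⟩ := hG u v
  obtain ⟨d, -, hd₁, hd₂⟩ := p.exists_boundary_dart S hu hv
  exact ⟨d.fst, hd₁, d.snd, hd₂, d.adj⟩

variable [DecidableEq V]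

noncomputable def incidentEdges (G : SimpleGraph V) [G.LocallyFinite] (x : V) : Finset G.edgeSet :=
  (G.incidenceFinset x).subtype (· ∈ G.edgeSet)

theorem mem_incidentEdges [G.LocallyFinite] {x : V} {e : G.edgeSet} :
    e ∈ G.incidentEdges x ↔ x ∈ (e : Sym2 V) := by
  simp [incidentEdges, incidenceSet]

theorem Preconnected.exists_incidentEdges_private [G.LocallyFinite] [Infinite V]
    (hG : G.Preconnected) (S : Finset V) (hS : S.Nonempty) :
    ∃ x ∈ S, ∃ e ∈ G.incidentEdges x, ∀ y ∈ S, y ≠ x → e ∉ G.incidentEdges y := by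
  obtain ⟨u, hu⟩ := hS
  obtain ⟨v, hv⟩ := Infinite.exists_notMem_finset S
  obtain ⟨x, hx, y, hy, hxy⟩ := hG.exists_adj_of_mem_of_notMem (S := ↑S) hu hv
  refine ⟨x, hx, ⟨s(x, y), hxy⟩, G.mem_incidentEdges.2 (Sym2.mem_mk_left x y),
    fun z hz hzx hze => ?_⟩
  rcases Sym2.mem_iff.1 (G.mem_incidentEdges.1 hze) with rfl | rfl
  exacts [hzx rfl, hy hz]

end SimpleGraph

theorem vertexLabel_eq_fract_sum {V : Type*} [DecidableEq V] {G : SimpleGraph V}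
    [G.LocallyFinite] {Ω : Type*} (ω : G.edgeSet → Ω → ℝ) (x : V) (a : Ω) :
    vertexLabel G ω x a = Int.fract (∑ e ∈ G.incidentEdges x, ω e a) := by
  rw [vertexLabel, SimpleGraph.incidentEdges, ← Finset.sum_subtype_of_mem _ fun e he =>
    G.incidenceSet_subset x ((G.mem_incidenceFinset x e).1 he)]
  simp

/-- Let `G` be an infinite, locally finite, connected simple graph with
independent uniform-`[0,1]` random variables `ω e` on the edges. Then the
variables `ξ x := (∑_{e ∋ x} ω e) mod 1`, for `x ∈ V`, are independent and
uniform on `[0,1]`. -/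
theorem vertexLabel_iid_uniform
    {V : Type*} [DecidableEq V] [Infinite V] (G : SimpleGraph V)
    (hconn : G.Connected) [G.LocallyFinite]
    {Ω : Type*} [MeasurableSpace Ω] (P : Measure Ω) [IsProbabilityMeasure P]
    (ω : G.edgeSet → Ω → ℝ)
    (hmeas : ∀ e, Measurable (ω e))
    (hindep : ProbabilityTheory.iIndepFun ω P)
    (hunif : ∀ e, Measure.map (ω e) P = volume.restrict (Set.Icc (0 : ℝ) 1)) :
    ProbabilityTheory.iIndepFun (vertexLabel G ω) P ∧
      ∀ x : V, Measure.map (vertexLabel G ω x) P =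
        volume.restrict (Set.Icc (0 : ℝ) 1) := by
  have hξ : vertexLabel G ω = fun x a => Int.fract (∑ e ∈ G.incidentEdges x, ω e a) :=
    funext₂ (vertexLabel_eq_fract_sum ω)
  rw [hξ]
  exact iIndepFun_fract_sum hmeas hindep hunif _ hconn.preconnected.exists_incidentEdges_private
end

section
/- In a bipartite graph G with a partial matching M, if x and y are adjacent vertices such that there exist simple alternating paths P_x from an unmatched vertex x₀ to x and P_y from an unmatched vertex y₀ to y, both of even length and both ending in matched edges (when of positive length), then x₀ ≠ y₀ and there exists an augmenting chain (a simple alternating path between two unmatched vertices) in G. -/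
/-- A walk is alternating with respect to a matching `M` if its edges alternate
between belonging to `M` and not. -/
def SimpleGraph.Walk.IsAlternating {V : Type*} {G : SimpleGraph V}
    (M : G.Subgraph) {u v : V} (p : G.Walk u v) : Prop :=
  List.Chain' (fun e f => (e ∈ M.edgeSet ↔ f ∉ M.edgeSet)) p.edges

/-!
Two-colour the graph. The walk `px`, then the edge `xy`, then `py` backwards is an odd walk from
`x₀` to `y₀`, so any two walks from `x₀` and from `y₀` to a common vertex have lengths of opposite
parity, and `x₀ ≠ y₀` since a closed walk is even. If `px` and `py` are disjoint, extend `px` by the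
edge `xy`, which is unmatched because the matched edge at `x` is the last edge of `px`; otherwise
cut both paths at the first vertex of `px` that lies on `py`. Either way we get two alternating
paths from unmatched vertices meeting only at their common end. An alternating path from an
unmatched vertex ends in a matched edge exactly when its length is even, so by the parity
of their lengths exactly one of the two last edges is matched, and the glued path is
augmenting.
-/

theorem List.IsChain.getLast_mem_iff {α : Type*} {S : Set α} {a : α} {l : List α}
    (h : (a :: l).IsChain (fun e f => e ∈ S ↔ f ∉ S)) :
    (a :: l).getLast (cons_ne_nil a l) ∈ S ↔ (a ∈ S ↔ Even l.length) := by
  induction l generalizing a with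
  | nil => simp
  | cons b t ih =>
    rw [isChain_cons_cons] at h
    rw [getLast_cons_cons, ih h.2, h.1, length_cons, Nat.even_add_one]
    tauto

namespace SimpleGraph.Walk

variable {V : Type*} {G : SimpleGraph V} {M : G.Subgraph} {u v w : V}

theorem isAlternating_append {p : G.Walk u v} {q : G.Walk v w} :
    (p.append q).IsAlternating M ↔ p.IsAlternating M ∧ q.IsAlternating M ∧
      ∀ e ∈ p.edges.getLast?, ∀ f ∈ q.edges.head?, (e ∈ M.edgeSet ↔ f ∉ M.edgeSet) := by
  rw [IsAlternating, edges_append]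
  exact List.isChain_append

theorem isAlternating_reverse {p : G.Walk u v} :
    p.reverse.IsAlternating M ↔ p.IsAlternating M := by
  rw [IsAlternating, IsAlternating, edges_reverse]
  change List.IsChain _ _ ↔ List.IsChain _ _
  simp only [List.isChain_reverse, iff_not_comm]

theorem IsAlternating.takeUntil [DecidableEq V] {p : G.Walk u v} (hp : p.IsAlternating M)
    (hw : w ∈ p.support) : (p.takeUntil w hw).IsAlternating M := by
  rw [← p.take_spec hw, isAlternating_append] at hp
  exact hp.1

theorem notMem_edgeSet_of_mem_head?_edges {p : G.Walk u v} (hu : u ∉ M.verts) :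
    ∀ e ∈ p.edges.head?, e ∉ M.edgeSet := by
  cases p with
  | nil => simp
  | cons h q =>
    simp only [edges_cons, List.head?_cons, Option.mem_some_iff, forall_eq']
    exact fun he ↦ hu (M.edge_vert (Subgraph.mem_edgeSet.mp he))

theorem IsAlternating.mem_edgeSet_getLast?_iff {p : G.Walk u v} (hp : p.IsAlternating M)
    (hu : u ∉ M.verts) : ∀ e ∈ p.edges.getLast?, e ∈ M.edgeSet ↔ Even p.length := by
  have hhead := notMem_edgeSet_of_mem_head?_edges (p := p) hu
  rw [← length_edges]
  cases h : p.edges with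
  | nil => simp
  | cons a l =>
    rw [IsAlternating, h] at hp
    rw [h] at hhead
    simp only [List.getLast?_eq_some_getLast (List.cons_ne_nil a l), Option.mem_some_iff,
      forall_eq', List.length_cons, Nat.even_add_one, hp.getLast_mem_iff]
    simp only [List.head?_cons, Option.mem_some_iff, forall_eq'] at hhead
    tauto

theorem IsAlternating.append_reverse {p : G.Walk u w} {q : G.Walk v w}
    (hp : p.IsAlternating M) (hq : q.IsAlternating M) (hu : u ∉ M.verts) (hv : v ∉ M.verts)
    (hpq : Odd (p.length + q.length)) : (p.append q.reverse).IsAlternating M := by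
  refine isAlternating_append.mpr ⟨hp, isAlternating_reverse.mpr hq, fun e he f hf ↦ ?_⟩
  rw [edges_reverse, List.head?_reverse] at hf
  rw [hp.mem_edgeSet_getLast?_iff hu e he, hq.mem_edgeSet_getLast?_iff hv f hf]
  rw [Nat.odd_add'] at hpq
  grind

theorem IsPath.append {p : G.Walk u v} {q : G.Walk v w} (hp : p.IsPath) (hq : q.IsPath)
    (hpq : ∀ x ∈ p.support, x ∈ q.support → x = v) : (p.append q).IsPath := by
  rw [isPath_def, support_append]
  refine hp.support_nodup.append hq.support_nodup.tail fun x hxp hyq ↦ ?_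
  have hx := hpq x hxp (List.mem_of_mem_tail hyq)
  subst hx
  have := hq.support_nodup
  rw [← cons_tail_support] at this
  exact (List.nodup_cons.mp this).1 hyq

theorem IsAlternating.concat (hM : M.IsMatching) {p : G.Walk u v} (hp : p.IsAlternating M)
    (hu : u ∉ M.verts) (hev : Even p.length) (hw : w ∉ p.support) (h : G.Adj v w) :
    (p.concat h).IsAlternating M := by
  rw [concat_eq_append, isAlternating_append]
  refine ⟨hp, List.isChain_singleton _, fun e he f hf ↦ ?_⟩
  simp only [edges_cons, edges_nil, List.head?_cons, Option.mem_some_iff] at hf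
  subst hf
  have heM : e ∈ M.edgeSet := (hp.mem_edgeSet_getLast?_iff hu e he).mpr hev
  simp only [heM, true_iff]
  intro hvw
  obtain ⟨hne, rfl⟩ := List.mem_getLast?_eq_getLast he
  rw [getLast_edges_eq_mk_penultimate_end, Subgraph.mem_edgeSet] at heM
  rw [Subgraph.mem_edgeSet] at hvw
  have hpen : p.penultimate = w := hM.eq_of_adj_left heM.symm hvw
  exact hw (hpen ▸ p.getVert_mem_support _)

def IsAugmenting (M : G.Subgraph) (p : G.Walk u v) : Prop :=
  u ≠ v ∧ u ∉ M.verts ∧ v ∉ M.verts ∧ p.IsPath ∧ p.IsAlternating M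

theorem isAugmenting_append_reverse (hG : G.Colorable 2) {p : G.Walk u w} {q : G.Walk v w}
    (hp : p.IsPath) (hq : q.IsPath) (hpa : p.IsAlternating M) (hqa : q.IsAlternating M)
    (hu : u ∉ M.verts) (hv : v ∉ M.verts) (hpq : ∀ x ∈ p.support, x ∈ q.support → x = w)
    (hodd : Odd (p.length + q.length)) : (p.append q.reverse).IsAugmenting M := by
  refine ⟨?_, hu, hv, hp.append hq.reverse (by simpa using hpq),
    hpa.append_reverse hqa hu hv hodd⟩
  rintro rfl
  have := two_colorable_iff_forall_loop_even.mp hG u (p.append q.reverse)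
  rw [length_append, length_reverse] at this
  exact Nat.not_even_iff_odd.mpr hodd this

theorem exists_meeting_alternating_paths (hM : M.IsMatching) {x y x₀ y₀ : V}
    (hxy : G.Adj x y) (hx₀ : x₀ ∉ M.verts) (px : G.Walk x₀ x) (py : G.Walk y₀ y)
    (hpx : px.IsPath) (hpy : py.IsPath) (hax : px.IsAlternating M) (hay : py.IsAlternating M)
    (hex : Even px.length) :
    ∃ (z : V) (p : G.Walk x₀ z) (q : G.Walk y₀ z), p.IsPath ∧ q.IsPath ∧
      p.IsAlternating M ∧ q.IsAlternating M ∧ ∀ w ∈ p.support, w ∈ q.support → w = z := by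
  classical
  by_cases hmeet : ∃ z ∈ px.support, z ∈ py.support
  · obtain ⟨z, hzy, hzx, hfirst⟩ := px.exists_mem_support_forall_mem_support_imp_eq
      py.support.toFinset (by simpa [Finset.Nonempty, and_comm] using hmeet)
    rw [List.mem_toFinset] at hzy
    refine ⟨z, px.takeUntil z hzx, py.takeUntil z hzy, hpx.takeUntil hzx, hpy.takeUntil hzy,
      hax.takeUntil hzx, hay.takeUntil hzy, fun w hwp hwq ↦ hfirst w ?_ hwp⟩
    exact List.mem_toFinset.mpr (py.support_takeUntil_subset_support hzy hwq)
  · push Not at hmeet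
    have hy : y ∉ px.support := fun h ↦ hmeet y h py.end_mem_support
    refine ⟨y, px.concat hxy, py, hpx.concat hy hxy, hpy, hax.concat hM hx₀ hex hy hxy, hay,
      fun w hwp hwq ↦ ?_⟩
    rw [support_concat, List.mem_append, List.mem_singleton] at hwp
    exact hwp.resolve_left fun h ↦ hmeet w h hwq

end SimpleGraph.Walk

open SimpleGraph Walk

theorem augmenting_chain_exists_general
    {V : Type*} (G : SimpleGraph V) (hbip : G.Colorable 2)
    (M : G.Subgraph) (hM : M.IsMatching)
    (x y x₀ y₀ : V) (hxy : G.Adj x y)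
    (hx₀ : x₀ ∉ M.verts) (hy₀ : y₀ ∉ M.verts)
    (px : G.Walk x₀ x) (py : G.Walk y₀ y)
    (hpx : px.IsPath) (hpy : py.IsPath)
    (hax : px.IsAlternating M) (hay : py.IsAlternating M)
    (hex : Even px.length) (hey : Even py.length) :
    x₀ ≠ y₀ ∧ ∃ (u w : V) (q : G.Walk u w), u ≠ w ∧ u ∉ M.verts ∧
      w ∉ M.verts ∧ q.IsPath ∧ q.IsAlternating M := by
  obtain ⟨z, p, q, hp, hq, hpa, hqa, hpq⟩ :=
    exists_meeting_alternating_paths hM hxy hx₀ px py hpx hpy hax hay hex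
  have hodd : Odd (p.length + q.length) := by
    have := (two_colorable_iff_forall_loop_even.mp hbip x₀
      (((px.concat hxy).append py.reverse).append (p.append q.reverse).reverse))
    simp only [length_append, length_reverse, length_concat] at this
    grind
  have haug := isAugmenting_append_reverse hbip hp hq hpa hqa hx₀ hy₀ hpq hodd
  exact ⟨haug.1, _, _, _, haug⟩

/-- In a bipartite graph with a matching `M`, if `x` and `y` are adjacent and
there are simple alternating paths of even length ending in matched edges from
unmatched vertices `x₀` to `x` and `y₀` to `y`, then `x₀ ≠ y₀` and there is an
augmenting chain: a simple alternating path between two distinct unmatched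
vertices. -/
theorem augmenting_chain_exists
    {V : Type*} (G : SimpleGraph V) (hbip : G.Colorable 2)
    (M : G.Subgraph) (hM : M.IsMatching)
    (x y x₀ y₀ : V) (hxy : G.Adj x y)
    (hx₀ : x₀ ∉ M.verts) (hy₀ : y₀ ∉ M.verts)
    (px : G.Walk x₀ x) (py : G.Walk y₀ y)
    (hpx : px.IsPath) (hpy : py.IsPath)
    (hax : px.IsAlternating M) (hay : py.IsAlternating M)
    (hex : Even px.length) (hey : Even py.length)
    (hlastx : ∀ e ∈ px.edges.getLast?, e ∈ M.edgeSet)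
    (hlasty : ∀ e ∈ py.edges.getLast?, e ∈ M.edgeSet) :
    x₀ ≠ y₀ ∧ ∃ (u w : V) (q : G.Walk u w), u ≠ w ∧ u ∉ M.verts ∧
      w ∉ M.verts ∧ q.IsPath ∧ q.IsAlternating M :=
  augmenting_chain_exists_general G hbip M hM x y x₀ y₀ hxy hx₀ hy₀ px py hpx hpy hax hay hex hey
end

section
/- In any graph G with matching M, if P is an alternating path (with respect to M) from an unmatched vertex x₀ to a vertex x, and G is bipartite, then the shortest path from x₀ to x contained in P (as a subpath of the edge set of P) is simple and alternating. -/
theorem Fin.two_ne_iff_eq_of_ne {x y z : Fin 2} (h : x ≠ y) : x ≠ z ↔ y = z := by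
  omega

namespace SimpleGraph.Walk

variable {V : Type*} {G : SimpleGraph V} (M : G.Subgraph)

@[simp]
theorem isAlternating_nil {u : V} : (nil : G.Walk u u).IsAlternating M :=
  List.IsChain.nil

theorem isAlternating_cons_iff {u v w : V} (h : G.Adj u v) (p : G.Walk v w) :
    (cons h p).IsAlternating M ↔
      (∀ e ∈ p.edges.head?, (s(u, v) ∈ M.edgeSet ↔ e ∉ M.edgeSet)) ∧ p.IsAlternating M :=
  List.isChain_cons

theorem isAlternating_and_head_iff_forall_dart (c : G.Coloring (Fin 2)) (a : Fin 2) :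
    ∀ {u v : V} (p : G.Walk u v),
      (p.IsAlternating M ∧ ∀ e ∈ p.edges.head?, (e ∈ M.edgeSet ↔ c u ≠ a)) ↔
        ∀ d ∈ p.darts, (d.edge ∈ M.edgeSet ↔ c d.fst ≠ a)
  | _, _, nil => by simp
  | u, _, cons (v := w) h p => by
    have ih := isAlternating_and_head_iff_forall_dart c a p
    have hcolour : c u ≠ a ↔ c w = a := Fin.two_ne_iff_eq_of_ne (c.valid h)
    simp only [isAlternating_cons_iff, edges_cons, darts_cons, List.head?_cons, Option.mem_some_iff,
      forall_eq', List.forall_mem_cons, Dart.edge_mk, Sym2.mk]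
    rw [← ih]
    by_cases hfirst : s(u, w) ∈ M.edgeSet ↔ c u ≠ a
    · simp only [hfirst, hcolour, and_true, true_and]
      rw [and_comm]
      exact and_congr_right fun _ => forall₂_congr fun _ _ => by tauto
    · simp only [hfirst, and_false, false_and]

theorem isAlternating_of_forall_dart (c : G.Coloring (Fin 2)) (a : Fin 2) {u v : V}
    {p : G.Walk u v} (h : ∀ d ∈ p.darts, (d.edge ∈ M.edgeSet ↔ c d.fst ≠ a)) :
    p.IsAlternating M :=
  ((isAlternating_and_head_iff_forall_dart M c a p).mpr h).1

theorem head_edges_notMem_of_notMem_verts {u v : V} (hu : u ∉ M.verts) (p : G.Walk u v) :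
    ∀ e ∈ p.edges.head?, e ∉ M.edgeSet := by
  cases p with
  | nil => simp
  | cons h p =>
    simp only [edges_cons, List.head?_cons, Option.mem_some_iff, forall_eq']
    exact fun he => hu (M.edge_vert he)

theorem IsAlternating.forall_dart_of_notMem_verts (c : G.Coloring (Fin 2)) {u v : V}
    {p : G.Walk u v} (hp : p.IsAlternating M) (hu : u ∉ M.verts) :
    ∀ d ∈ p.darts, (d.edge ∈ M.edgeSet ↔ c d.fst ≠ c u) :=
  (isAlternating_and_head_iff_forall_dart M c (c u) p).mp
    ⟨hp, fun e he => by simpa using head_edges_notMem_of_notMem_verts M hu p e he⟩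

end SimpleGraph.Walk

theorem alternating_walk_contains_alternating_path_general
    {V : Type*} (G : SimpleGraph V) (hbip : G.Colorable 2)
    (M : G.Subgraph)
    (x₀ x : V) (hx₀ : x₀ ∉ M.verts)
    (p : G.Walk x₀ x) (halt : p.IsAlternating M) :
    ∃ q : G.Walk x₀ x, q.IsPath ∧ (∀ e ∈ q.edges, e ∈ p.edges) ∧
      q.IsAlternating M := by
  classical
  obtain ⟨c⟩ := hbip
  have hdarts := halt.forall_dart_of_notMem_verts M c hx₀
  exact ⟨p.bypass, p.bypass_isPath, fun e he => p.edges_bypass_subset_edges he,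
    SimpleGraph.Walk.isAlternating_of_forall_dart M c (c x₀) fun d hd =>
      hdarts d (p.darts_bypass_subset_darts hd)⟩

/-- In a bipartite graph, an alternating walk from an unmatched vertex `x₀` to a
vertex `x` contains a simple alternating path from `x₀` to `x`. -/
theorem alternating_walk_contains_alternating_path
    {V : Type*} (G : SimpleGraph V) (hbip : G.Colorable 2)
    (M : G.Subgraph) (hM : M.IsMatching)
    (x₀ x : V) (hx₀ : x₀ ∉ M.verts)
    (p : G.Walk x₀ x) (halt : p.IsAlternating M) :
    ∃ q : G.Walk x₀ x, q.IsPath ∧ (∀ e ∈ q.edges, e ∈ p.edges) ∧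
      q.IsAlternating M :=
  alternating_walk_contains_alternating_path_general G hbip M x₀ x hx₀ p halt
end
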